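/- Let d be an (⊙,∨)-derivation on the standard MV-algebra I = [0,1]. Then for every x ∈ I and every positive integer m, d(x^{⊙m}) = x^{⊙(m−1)} ⊙ d(x), where x^{⊙0} = 1 and x^{⊙k} denotes the k-fold ⊙-power x ⊙ x ⊙ ⋯ ⊙ x. -/
import Mathlib


/-- Łukasiewicz strong conjunction `x ⊙ y = max 0 (x + y - 1)` on the unit interval. -/
noncomputable def od (x y : unitInterval) : unitInterval :=
  ⟨max 0 (x.1 + y.1 - 1),
    ⟨le_max_left _ _, max_le zero_le_one (by have := x.2.2; have := y.2.2; linarith)⟩⟩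

/-- Łukasiewicz strong disjunction `x ⊕ y = min 1 (x + y)` on the unit interval. -/
noncomputable def op (x y : unitInterval) : unitInterval :=
  ⟨min 1 (x.1 + y.1),
    ⟨le_min zero_le_one (by have := x.2.1; have := y.2.1; linarith), min_le_left _ _⟩⟩

/-- `d` is an `(⊙,∨)`-derivation on the standard MV-algebra `[0,1]`:
`d (x ⊙ y) = (d x ⊙ y) ∨ (x ⊙ d y)` for all `x, y`. -/
def IsOdotDer (d : unitInterval → unitInterval) : Prop :=
  ∀ x y : unitInterval, d (od x y) = max (od (d x) y) (od x (d y))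

/-- k-fold ⊙-power, with x^{⊙0} = 1. -/
noncomputable def opow (x : unitInterval) : ℕ → unitInterval
  | 0 => 1
  | k + 1 => od (opow x k) x

lemma od_comm (a b : unitInterval) : od a b = od b a := by
  apply Subtype.ext
  simp only [od]
  ring_nf

lemma trunc_assoc (a b c : ℝ) (hc : c ≤ 1) (ha : 0 ≤ a) :
    max 0 (max 0 (a + b - 1) + c - 1) = max 0 (a + b + c - 2) := by
  rcases le_total (a + b - 1) 0 with h | h
  · rw [max_eq_left h, max_eq_left (by linarith), max_eq_left (by linarith)]
  · rw [max_eq_right h]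
    congr 1
    ring

lemma od_assoc (a b c : unitInterval) : od (od a b) c = od a (od b c) := by
  apply Subtype.ext
  have ha1 := a.2.1; have hb1 := b.2.1
  have hc2 := c.2.2; have ha2 := a.2.2
  show max 0 (max 0 (a.1 + b.1 - 1) + c.1 - 1) = max 0 (a.1 + max 0 (b.1 + c.1 - 1) - 1)
  rw [trunc_assoc _ _ _ hc2 ha1]
  have : a.1 + max 0 (b.1 + c.1 - 1) - 1 = max 0 (b.1 + c.1 - 1) + a.1 - 1 := by ring
  rw [this, trunc_assoc _ _ _ ha2 hb1]
  congr 1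
  ring

lemma od_one_left (x : unitInterval) : od 1 x = x := by
  apply Subtype.ext
  simp only [od]
  have h1 := x.2.1
  simp
  linarith

lemma key (d : unitInterval → unitInterval) (hd : IsOdotDer d) (x : unitInterval) :
    ∀ k : ℕ, d (opow x (k + 1)) = od (opow x k) (d x) := by
  intro k
  induction k with
  | zero =>
      have h1 : opow x 1 = x := od_one_left x
      rw [h1]
      show d x = od 1 (d x)
      rw [od_one_left]
  | succ n ih =>
      show d (od (opow x (n + 1)) x) = od (opow x (n + 1)) (d x)
      rw [hd, ih]
      have : od (od (opow x n) (d x)) x = od (opow x (n + 1)) (d x) := by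
        rw [od_assoc, od_comm (d x) x, ← od_assoc]
        rfl
      rw [this, max_self]

/-- d(x^{⊙m}) = x^{⊙(m-1)} ⊙ d(x) for every positive m. -/
theorem stmt1 (d : unitInterval → unitInterval) (hd : IsOdotDer d) :
    ∀ x : unitInterval, ∀ m : ℕ, 0 < m → d (opow x m) = od (opow x (m - 1)) (d x) := by
  intro x m hm
  obtain ⟨k, rfl⟩ := Nat.exists_eq_add_of_lt hm
  rw [Nat.zero_add, Nat.add_sub_cancel]
  exact key d hd x k
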